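/- arXiv:2402.08148 — 5 statements merged into one kernel-verified Lean document; each statement's English description precedes it below -/
import Mathlib

section
/- Suppose J : ℝⁿ × ℝ → ℝ is continuously differentiable, Ω ⊆ ℝⁿ, U ⊆ ℝᵐ, t₀ ≤ T, and J satisfies the dissipation inequality ∂ₜJ(x,t) + c(x,u,t) + ⟨∇ₓJ(x,t), f(x,u)⟩ ≥ 0 for all (x,u,t) ∈ Ω × U × [t₀,T], together with the boundary inequality J(x,T) ≤ g(x) for all x ∈ Ω. Let u : [t₀,T] → U be measurable and let x̃ : [t₀,T] → Ω be a C¹ solution of ẋ̃(t) = f(x̃(t), u(t)) with x̃(t₀) = x₀ ∈ Ω. Then J(x₀, t₀) ≤ ∫_{t₀}^{T} c(x̃(t), u(t), t) dt + g(x̃(T)). -/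
/-!
Along the trajectory, `φ t = J (x̃ t, t)` has derivative `∂ₜJ + ⟨∇ₓJ, f(x̃, u)⟩ ≥ -c(x̃, u, t)` by the
dissipation inequality, so integrating gives `J (x₀, t₀) ≤ ∫ c + J (x̃ T, T)`, and the boundary
inequality bounds the last term by `g (x̃ T)`.
-/

open MeasureTheory Set

theorem HasDerivAt.comp_prodMk_id {E F : Type*} [NormedAddCommGroup E] [NormedSpace ℝ E]
    [NormedAddCommGroup F] [NormedSpace ℝ F] {J : E × ℝ → F} {x : ℝ → E} {x' : E} {t : ℝ}
    (hJ : DifferentiableAt ℝ J (x t, t)) (hx : HasDerivAt x x' t) :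
    HasDerivAt (fun s => J (x s, s)) (fderiv ℝ J (x t, t) (x', 1)) t :=
  hJ.hasFDerivAt.comp_hasDerivAt (f := fun s => (x s, s)) t (hx.prodMk (hasDerivAt_id t))

theorem le_integral_add_of_hasDerivAt_of_neg_le {φ φ' c : ℝ → ℝ} {a b : ℝ} (hab : a ≤ b)
    (hφ : ∀ t ∈ Icc a b, HasDerivAt φ (φ' t) t) (hc : IntervalIntegrable c volume a b)
    (hle : ∀ t ∈ Ioo a b, -c t ≤ φ' t) :
    φ a ≤ (∫ t in a..b, c t) + φ b := by
  have hneg : ∀ t ∈ Icc a b, HasDerivAt (fun s => -φ s) (-φ' t) t := fun t ht => (hφ t ht).neg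
  have key := intervalIntegral.sub_le_integral_of_hasDeriv_right_of_le hab
    (fun t ht => (hneg t ht).continuousAt.continuousWithinAt)
    (fun t ht => (hneg t (Ioo_subset_Icc_self ht)).hasDerivWithinAt)
    ((intervalIntegrable_iff_integrableOn_Icc_of_le hab).1 hc)
    (fun t ht => neg_le.1 (hle t ht))
  linarith

theorem sub_value_trajectory_general {n m : ℕ}
    (J : ((Fin n → ℝ) × ℝ) → ℝ) (hJ : ContDiff ℝ 1 J)
    (c : (Fin n → ℝ) → (Fin m → ℝ) → ℝ → ℝ)
    (g : (Fin n → ℝ) → ℝ)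
    (f : (Fin n → ℝ) → (Fin m → ℝ) → (Fin n → ℝ))
    (Ω : Set (Fin n → ℝ)) (U : Set (Fin m → ℝ)) (t₀ T : ℝ) (ht : t₀ ≤ T)
    (hdiss : ∀ x ∈ Ω, ∀ u ∈ U, ∀ t ∈ Icc t₀ T,
      0 ≤ fderiv ℝ J (x, t) (f x u, 1) + c x u t)
    (hbdry : ∀ x ∈ Ω, J (x, T) ≤ g x)
    (u : ℝ → Fin m → ℝ) (huU : ∀ t ∈ Icc t₀ T, u t ∈ U)
    (x₀ : Fin n → ℝ)
    (xt : ℝ → Fin n → ℝ) (hinit : xt t₀ = x₀) (hxΩ : ∀ t ∈ Icc t₀ T, xt t ∈ Ω)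
    (hode : ∀ t ∈ Icc t₀ T, HasDerivAt xt (f (xt t) (u t)) t)
    (hint : IntervalIntegrable (fun t => c (xt t) (u t) t) volume t₀ T) :
    J (x₀, t₀) ≤ (∫ t in t₀..T, c (xt t) (u t) t) + g (xt T) := by
  subst hinit
  have hderiv : ∀ t ∈ Icc t₀ T, HasDerivAt (fun s => J (xt s, s))
      (fderiv ℝ J (xt t, t) (f (xt t) (u t), 1)) t := fun t ht =>
    .comp_prodMk_id ((hJ.differentiable one_ne_zero) _) (hode t ht)
  have hintegrated := le_integral_add_of_hasDerivAt_of_neg_le ht hderiv hint fun t ht' => by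
    have ht'' := Ioo_subset_Icc_self ht'
    linarith [hdiss _ (hxΩ t ht'') _ (huU t ht'') t ht'']
  linarith [hbdry _ (hxΩ T ⟨ht, le_rfl⟩)]

/-- Proposition 1 (trajectory-wise version): if C¹ `J` satisfies the relaxed HJB
inequalities, then along any admissible trajectory
`J(x₀,t₀) ≤ ∫ c + g(x̃(T))`.  Here `∂ₜJ(x,t) + ⟨∇ₓJ(x,t), v⟩` is written as
`fderiv ℝ J (x,t) (v,1)`. -/
theorem sub_value_trajectory {n m : ℕ}
    (J : ((Fin n → ℝ) × ℝ) → ℝ) (hJ : ContDiff ℝ 1 J)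
    (c : (Fin n → ℝ) → (Fin m → ℝ) → ℝ → ℝ) (hc : Continuous fun p : (Fin n → ℝ) × (Fin m → ℝ) × ℝ => c p.1 p.2.1 p.2.2)
    (g : (Fin n → ℝ) → ℝ)
    (f : (Fin n → ℝ) → (Fin m → ℝ) → (Fin n → ℝ))
    (hf : Continuous fun p : (Fin n → ℝ) × (Fin m → ℝ) => f p.1 p.2)
    (Ω : Set (Fin n → ℝ)) (U : Set (Fin m → ℝ)) (t₀ T : ℝ) (ht : t₀ ≤ T)
    (hdiss : ∀ x ∈ Ω, ∀ u ∈ U, ∀ t ∈ Icc t₀ T,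
      0 ≤ fderiv ℝ J (x, t) (f x u, 1) + c x u t)
    (hbdry : ∀ x ∈ Ω, J (x, T) ≤ g x)
    (u : ℝ → Fin m → ℝ) (hu : Measurable u) (huU : ∀ t ∈ Icc t₀ T, u t ∈ U)
    (x₀ : Fin n → ℝ) (hx₀ : x₀ ∈ Ω)
    (xt : ℝ → Fin n → ℝ) (hinit : xt t₀ = x₀) (hxΩ : ∀ t ∈ Icc t₀ T, xt t ∈ Ω)
    (hode : ∀ t ∈ Icc t₀ T, HasDerivAt xt (f (xt t) (u t)) t)
    (hint : IntervalIntegrable (fun t => c (xt t) (u t) t) volume t₀ T) :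
    J (x₀, t₀) ≤ (∫ t in t₀..T, c (xt t) (u t) t) + g (xt T) :=
  sub_value_trajectory_general J hJ c g f Ω U t₀ T ht hdiss hbdry u huU x₀ xt hinit hxΩ hode hint
end

section
/- Under the hypotheses of the previous statement, if V(x₀,t₀) denotes the infimum over all admissible pairs (u, x̃) (measurable u : [t₀,T] → U with C¹ trajectory x̃ remaining in Ω, x̃(t₀)=x₀) of ∫_{t₀}^{T} c(x̃(t),u(t),t) dt + g(x̃(T)), then J(x₀,t₀) ≤ V(x₀,t₀) for every x₀ ∈ Ω and t₀ ∈ [0,T]. -/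
/- Along an admissible pair, the HJB inequality says that `t ↦ J (x t, t)` decreases no faster
than the running cost accumulates; integrating from `t₀` to `T` and using `J (·, T) ≤ g` bounds
`J (x₀, t₀)` by the cost of the pair, hence by the infimum. -/

open MeasureTheory Set

/-- An admissible pair for the OCP: measurable control with values in `U`, and a C¹
trajectory of `ẋ = f(x,u)` starting at `x₀` and remaining in `Ω`, whose running cost
is integrable. -/
def AdmissiblePair {n m : ℕ} (f : (Fin n → ℝ) → (Fin m → ℝ) → (Fin n → ℝ))
    (c : (Fin n → ℝ) → (Fin m → ℝ) → ℝ → ℝ)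
    (Ω : Set (Fin n → ℝ)) (U : Set (Fin m → ℝ)) (t₀ T : ℝ) (x₀ : Fin n → ℝ)
    (u : ℝ → Fin m → ℝ) (x : ℝ → Fin n → ℝ) : Prop :=
  Measurable u ∧ (∀ t ∈ Icc t₀ T, u t ∈ U) ∧ (∀ t ∈ Icc t₀ T, x t ∈ Ω) ∧
    x t₀ = x₀ ∧ (∀ t ∈ Icc t₀ T, HasDerivAt x (f (x t) (u t)) t) ∧
    IntervalIntegrable (fun t => c (x t) (u t) t) volume t₀ T

/-- The value function as an `EReal`-valued infimum over admissible pairs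
(`+∞` if no admissible pair exists). -/
noncomputable def ValueFn {n m : ℕ} (f : (Fin n → ℝ) → (Fin m → ℝ) → (Fin n → ℝ))
    (c : (Fin n → ℝ) → (Fin m → ℝ) → ℝ → ℝ) (g : (Fin n → ℝ) → ℝ)
    (Ω : Set (Fin n → ℝ)) (U : Set (Fin m → ℝ)) (t₀ T : ℝ) (x₀ : Fin n → ℝ) : EReal :=
  sInf {y : EReal | ∃ u x, AdmissiblePair f c Ω U t₀ T x₀ u x ∧
    y = (((∫ t in t₀..T, c (x t) (u t) t) + g (x T) : ℝ) : EReal)}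

section

variable {E : Type*} [NormedAddCommGroup E] [NormedSpace ℝ E]

theorem HasDerivAt.comp_graph {J : E × ℝ → ℝ} {x : ℝ → E} {x' : E} {t : ℝ}
    (hJ : DifferentiableAt ℝ J (x t, t)) (hx : HasDerivAt x x' t) :
    HasDerivAt (fun s => J (x s, s)) (fderiv ℝ J (x t, t) (x', 1)) t :=
  hJ.hasFDerivAt.comp_hasDerivAt (f := fun s => (x s, s)) t (hx.prodMk (hasDerivAt_id t))

theorem le_integral_add_of_fderiv_add_nonneg {J : E × ℝ → ℝ} (hJ : Differentiable ℝ J)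
    {x x' : ℝ → E} {ℓ : ℝ → ℝ} {a b : ℝ} (hab : a ≤ b)
    (hx : ∀ t ∈ Icc a b, HasDerivAt x (x' t) t) (hℓ : IntervalIntegrable ℓ volume a b)
    (hdiss : ∀ t ∈ Ioo a b, 0 ≤ fderiv ℝ J (x t, t) (x' t, 1) + ℓ t) :
    J (x a, a) ≤ (∫ t in a..b, ℓ t) + J (x b, b) := by
  have hderiv : ∀ t ∈ Icc a b,
      HasDerivAt (fun s => J (x s, s)) (fderiv ℝ J (x t, t) (x' t, 1)) t :=
    fun t ht => (hx t ht).comp_graph (hJ _)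
  have key : (∫ t in a..b, -ℓ t) ≤ J (x b, b) - J (x a, a) :=
    intervalIntegral.integral_le_sub_of_hasDeriv_right_of_le hab
      (fun t ht => (hderiv t ht).continuousAt.continuousWithinAt)
      (fun t ht => (hderiv t (Ioo_subset_Icc_self ht)).hasDerivWithinAt)
      ((intervalIntegrable_iff_integrableOn_Icc_of_le hab).mp hℓ).neg
      (fun t ht => by linarith [hdiss t ht])
  rw [intervalIntegral.integral_neg] at key
  linarith

end

theorem sub_value_function_general {n m : ℕ}
    (J : ((Fin n → ℝ) × ℝ) → ℝ) (hJ : ContDiff ℝ 1 J)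
    (c : (Fin n → ℝ) → (Fin m → ℝ) → ℝ → ℝ)
    (g : (Fin n → ℝ) → ℝ)
    (f : (Fin n → ℝ) → (Fin m → ℝ) → (Fin n → ℝ))
    (Ω : Set (Fin n → ℝ)) (U : Set (Fin m → ℝ)) (T : ℝ)
    (hdiss : ∀ x ∈ Ω, ∀ u ∈ U, ∀ t ∈ Icc (0:ℝ) T,
      0 ≤ fderiv ℝ J (x, t) (f x u, 1) + c x u t)
    (hbdry : ∀ x ∈ Ω, J (x, T) ≤ g x) :
    ∀ x₀ ∈ Ω, ∀ t₀ ∈ Icc (0:ℝ) T,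
      (J (x₀, t₀) : EReal) ≤ ValueFn f c g Ω U t₀ T x₀ := by
  rintro x₀ - t₀ ⟨ht₀, ht₀T⟩
  refine le_sInf ?_
  rintro y ⟨u, x, ⟨-, hu, hxΩ, rfl, hx, hc⟩, rfl⟩
  rw [EReal.coe_le_coe_iff]
  have hT : T ∈ Icc t₀ T := ⟨ht₀T, le_rfl⟩
  calc J (x t₀, t₀) ≤ (∫ t in t₀..T, c (x t) (u t) t) + J (x T, T) :=
        le_integral_add_of_fderiv_add_nonneg (hJ.differentiable one_ne_zero) ht₀T hx hc
          fun t ht => hdiss _ (hxΩ t (Ioo_subset_Icc_self ht)) _ (hu t (Ioo_subset_Icc_self ht))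
            t ⟨ht₀.trans ht.1.le, ht.2.le⟩
    _ ≤ (∫ t in t₀..T, c (x t) (u t) t) + g (x T) := by gcongr; exact hbdry _ (hxΩ T hT)

/-- Proposition 1: a C¹ function satisfying the relaxed HJB inequalities is a
sub-value function: `J(x₀,t₀) ≤ V(x₀,t₀)` for every `x₀ ∈ Ω`, `t₀ ∈ [0,T]`. -/
theorem sub_value_function {n m : ℕ}
    (J : ((Fin n → ℝ) × ℝ) → ℝ) (hJ : ContDiff ℝ 1 J)
    (c : (Fin n → ℝ) → (Fin m → ℝ) → ℝ → ℝ)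
    (hc : Continuous fun p : (Fin n → ℝ) × (Fin m → ℝ) × ℝ => c p.1 p.2.1 p.2.2)
    (g : (Fin n → ℝ) → ℝ)
    (f : (Fin n → ℝ) → (Fin m → ℝ) → (Fin n → ℝ))
    (hf : Continuous fun p : (Fin n → ℝ) × (Fin m → ℝ) => f p.1 p.2)
    (Ω : Set (Fin n → ℝ)) (U : Set (Fin m → ℝ)) (T : ℝ) (hT : 0 ≤ T)
    (hdiss : ∀ x ∈ Ω, ∀ u ∈ U, ∀ t ∈ Icc (0:ℝ) T,
      0 ≤ fderiv ℝ J (x, t) (f x u, 1) + c x u t)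
    (hbdry : ∀ x ∈ Ω, J (x, T) ≤ g x) :
    ∀ x₀ ∈ Ω, ∀ t₀ ∈ Icc (0:ℝ) T,
      (J (x₀, t₀) : EReal) ≤ ValueFn f c g Ω U t₀ T x₀ :=
  sub_value_function_general J hJ c g f Ω U T hdiss hbdry
end

section
/- Suppose V ∈ C¹(ℝⁿ × ℝ, ℝ) satisfies the HJB equation with attained infimum as above, V(x,T) = g(x) for all x, and k : ℝⁿ × [t₀,T] → U is a measurable selection with k(x,t) ∈ argmin_{u∈U} { c(x,u,t) + ⟨∇ₓV(x,t), f(x,u)⟩ }. Let x* : [t₀,T] → ℝⁿ be a C¹ solution of ẋ*(t) = f(x*(t), k(x*(t),t)) with x*(t₀) = x₀, and set u*(t) = k(x*(t),t). Then ∫_{t₀}^{T} c(x*(t), u*(t), t) dt + g(x*(T)) = V(x₀, t₀). -/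
open MeasureTheory Set

/-! By the chain rule, the HJB equation evaluated along the closed-loop trajectory says that
`t ↦ V(x*(t), t)` has derivative `-c(x*(t), u*(t), t)`; the fundamental theorem of calculus and
`V(·, T) = g` give the identity. -/

theorem HasFDerivAt.hasDerivAt_along_graph {E : Type*} [NormedAddCommGroup E] [NormedSpace ℝ E]
    {V : E × ℝ → ℝ} {V' : E × ℝ →L[ℝ] ℝ} {x : ℝ → E} {v : E} {t : ℝ}
    (hV : HasFDerivAt V V' (x t, t)) (hx : HasDerivAt x v t) :
    HasDerivAt (fun s => V (x s, s)) (V' (0, 1) + V' (v, 0)) t := by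
  have hsplit : ((v, 1) : E × ℝ) = (0, 1) + (v, 0) := by simp
  have hcomp := hV.comp_hasDerivAt_of_eq t (hx.prodMk (hasDerivAt_id t)) rfl
  rw [hsplit, map_add] at hcomp
  exact hcomp

theorem integral_add_eq_of_hjb_along {E : Type*} [NormedAddCommGroup E] [NormedSpace ℝ E]
    {V : E × ℝ → ℝ} (hV : Differentiable ℝ V) {x x' : ℝ → E} {ℓ : ℝ → ℝ} {a b : ℝ}
    (hab : a ≤ b) (hx : ∀ t ∈ Icc a b, HasDerivAt x (x' t) t)
    (hhjb : ∀ t ∈ Icc a b,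
      fderiv ℝ V (x t, t) (0, 1) + (ℓ t + fderiv ℝ V (x t, t) (x' t, 0)) = 0)
    (hℓ : IntervalIntegrable ℓ volume a b) :
    (∫ t in a..b, ℓ t) + V (x b, b) = V (x a, a) := by
  have hderiv : ∀ t ∈ uIcc a b, HasDerivAt (fun s => V (x s, s)) (-ℓ t) t := by
    intro t ht
    rw [uIcc_of_le hab] at ht
    convert (hV _).hasFDerivAt.hasDerivAt_along_graph (hx t ht) using 1
    linarith [hhjb t ht]
  have hftc := intervalIntegral.integral_eq_sub_of_hasDerivAt hderiv hℓ.neg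
  rw [intervalIntegral.integral_neg] at hftc
  linarith

theorem verification_closed_loop_general {n m : ℕ}
    (V : ((Fin n → ℝ) × ℝ) → ℝ) (hV : ContDiff ℝ 1 V)
    (c : (Fin n → ℝ) → (Fin m → ℝ) → ℝ → ℝ)
    (g : (Fin n → ℝ) → ℝ)
    (f : (Fin n → ℝ) → (Fin m → ℝ) → (Fin n → ℝ))
    (U : Set (Fin m → ℝ)) (t₀ T : ℝ) (ht : t₀ ≤ T)
    (k : (Fin n → ℝ) → ℝ → Fin m → ℝ)
    (hk : ∀ x : Fin n → ℝ, ∀ t ∈ Icc t₀ T, k x t ∈ U ∧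
      (∀ u ∈ U, c x (k x t) t + fderiv ℝ V (x, t) (f x (k x t), 0)
          ≤ c x u t + fderiv ℝ V (x, t) (f x u, 0)) ∧
      fderiv ℝ V (x, t) (0, 1) + (c x (k x t) t + fderiv ℝ V (x, t) (f x (k x t), 0)) = 0)
    (hbdry : ∀ x : Fin n → ℝ, V (x, T) = g x)
    (x₀ : Fin n → ℝ) (xs : ℝ → Fin n → ℝ) (hinit : xs t₀ = x₀)
    (hode : ∀ t ∈ Icc t₀ T, HasDerivAt xs (f (xs t) (k (xs t) t)) t)
    (hint : IntervalIntegrable (fun t => c (xs t) (k (xs t) t) t) volume t₀ T) :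
    (∫ t in t₀..T, c (xs t) (k (xs t) t) t) + g (xs T) = V (x₀, t₀) := by
  rw [← hbdry, ← hinit]
  exact integral_add_eq_of_hjb_along (hV.differentiable one_ne_zero) ht hode
    (fun t htI => (hk (xs t) t htI).2.2) hint

/-- Verification theorem (closed-loop identity): if C¹ `V` solves the HJB PDE with
attained infimum, `V(·,T) = g`, `k` is a measurable argmin selection, and `x*` is a
C¹ closed-loop trajectory from `x₀`, then the closed-loop cost equals `V(x₀,t₀)`. -/
theorem verification_closed_loop {n m : ℕ}
    (V : ((Fin n → ℝ) × ℝ) → ℝ) (hV : ContDiff ℝ 1 V)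
    (c : (Fin n → ℝ) → (Fin m → ℝ) → ℝ → ℝ)
    (hc : Continuous fun p : (Fin n → ℝ) × (Fin m → ℝ) × ℝ => c p.1 p.2.1 p.2.2)
    (g : (Fin n → ℝ) → ℝ)
    (f : (Fin n → ℝ) → (Fin m → ℝ) → (Fin n → ℝ))
    (hf : Continuous fun p : (Fin n → ℝ) × (Fin m → ℝ) => f p.1 p.2)
    (U : Set (Fin m → ℝ)) (hU : U.Nonempty) (t₀ T : ℝ) (ht : t₀ ≤ T)
    (k : (Fin n → ℝ) → ℝ → Fin m → ℝ)
    (hkmeas : Measurable fun p : (Fin n → ℝ) × ℝ => k p.1 p.2)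
    (hk : ∀ x : Fin n → ℝ, ∀ t ∈ Icc t₀ T, k x t ∈ U ∧
      (∀ u ∈ U, c x (k x t) t + fderiv ℝ V (x, t) (f x (k x t), 0)
          ≤ c x u t + fderiv ℝ V (x, t) (f x u, 0)) ∧
      fderiv ℝ V (x, t) (0, 1) + (c x (k x t) t + fderiv ℝ V (x, t) (f x (k x t), 0)) = 0)
    (hbdry : ∀ x : Fin n → ℝ, V (x, T) = g x)
    (x₀ : Fin n → ℝ) (xs : ℝ → Fin n → ℝ) (hinit : xs t₀ = x₀)
    (hode : ∀ t ∈ Icc t₀ T, HasDerivAt xs (f (xs t) (k (xs t) t)) t)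
    (hint : IntervalIntegrable (fun t => c (xs t) (k (xs t) t) t) volume t₀ T) :
    (∫ t in t₀..T, c (xs t) (k (xs t) t) t) + g (xs T) = V (x₀, t₀) :=
  verification_closed_loop_general V hV c g f U t₀ T ht k hk hbdry x₀ xs hinit hode hint
end

section
/- Under the hypotheses of the verification theorem above, the control u*(t) = k(x*(t),t) is optimal: for any other admissible pair (u, x̃) with u : [t₀,T] → U measurable, x̃ a C¹ solution of ẋ̃ = f(x̃, u) with x̃(t₀) = x₀, one has ∫_{t₀}^{T} c(x*(t),u*(t),t) dt + g(x*(T)) ≤ ∫_{t₀}^{T} c(x̃(t),u(t),t) dt + g(x̃(T)). -/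
open MeasureTheory Set

/-!
Along any admissible trajectory `y` driven by a control `w`, the chain rule gives
`d/dt V(y t, t) = ∂ₓV · f(y, w) + ∂ₜV`. The HJB equation makes this `-c` along the closed loop
and, since `k` minimises the Hamiltonian, at least `-c` along any other pair. Integrating,
the optimal cost equals `V(x₀, t₀) - V(x*(T), T)` while every other cost is at least
`V(x₀, t₀) - V(x̃(T), T)`, and `V(·, T) = g` turns this into the claim.
-/

section ValueAlongTrajectory

variable {E : Type*} [NormedAddCommGroup E] [NormedSpace ℝ E]
  {V : E × ℝ → ℝ} {y : ℝ → E} {y' : ℝ → E} {ℓ : ℝ → ℝ} {a b : ℝ}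

theorem HasDerivAt.value_along {v : E} {t : ℝ} (hV : DifferentiableAt ℝ V (y t, t))
    (hy : HasDerivAt y v t) :
    HasDerivAt (fun s => V (y s, s))
      (fderiv ℝ V (y t, t) (v, 0) + fderiv ℝ V (y t, t) (0, 1)) t := by
  have hsplit : ((v, 1) : E × ℝ) = (v, 0) + (0, 1) := by simp
  rw [← map_add, ← hsplit]
  exact hV.hasFDerivAt.comp_hasDerivAt (f := fun s => (y s, s)) t
    (hy.prodMk (hasDerivAt_id t))

theorem integral_eq_value_sub_of_hjb (hab : a ≤ b) (hV : Differentiable ℝ V)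
    (hy : ∀ t ∈ Icc a b, HasDerivAt y (y' t) t) (hℓ : IntervalIntegrable ℓ volume a b)
    (hhjb : ∀ t ∈ Icc a b,
      fderiv ℝ V (y t, t) (0, 1) + (ℓ t + fderiv ℝ V (y t, t) (y' t, 0)) = 0) :
    ∫ t in a..b, ℓ t = V (y a, a) - V (y b, b) := by
  have hderiv : ∀ t ∈ uIcc a b, HasDerivAt (fun s => V (y s, s)) (-ℓ t) t := by
    intro t ht
    rw [uIcc_of_le hab] at ht
    convert (hy t ht).value_along (hV _) using 1
    linarith [hhjb t ht]
  rw [← neg_sub, ← intervalIntegral.integral_eq_sub_of_hasDerivAt hderiv hℓ.neg,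
    intervalIntegral.integral_neg, neg_neg]

theorem value_sub_le_integral_of_hjb (hab : a ≤ b) (hV : Differentiable ℝ V)
    (hy : ∀ t ∈ Icc a b, HasDerivAt y (y' t) t) (hℓ : IntervalIntegrable ℓ volume a b)
    (hhjb : ∀ t ∈ Icc a b,
      0 ≤ fderiv ℝ V (y t, t) (0, 1) + (ℓ t + fderiv ℝ V (y t, t) (y' t, 0))) :
    V (y a, a) - V (y b, b) ≤ ∫ t in a..b, ℓ t := by
  have hderiv : ∀ t ∈ Icc a b, HasDerivAt (fun s => V (y s, s))
      (fderiv ℝ V (y t, t) (y' t, 0) + fderiv ℝ V (y t, t) (0, 1)) t :=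
    fun t ht => (hy t ht).value_along (hV _)
  have hle := intervalIntegral.integral_le_sub_of_hasDeriv_right_of_le (φ := fun t => -ℓ t) hab
    (fun t ht => (hderiv t ht).continuousAt.continuousWithinAt)
    (fun t ht => (hderiv t (Ioo_subset_Icc_self ht)).hasDerivWithinAt)
    ((intervalIntegrable_iff_integrableOn_Icc_of_le hab).mp hℓ.neg)
    (fun t ht => by linarith [hhjb t (Ioo_subset_Icc_self ht)])
  rw [intervalIntegral.integral_neg] at hle
  linarith

end ValueAlongTrajectory

theorem verification_optimality_general {n m : ℕ}
    (V : ((Fin n → ℝ) × ℝ) → ℝ) (hV : ContDiff ℝ 1 V)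
    (c : (Fin n → ℝ) → (Fin m → ℝ) → ℝ → ℝ)
    (g : (Fin n → ℝ) → ℝ)
    (f : (Fin n → ℝ) → (Fin m → ℝ) → (Fin n → ℝ))
    (U : Set (Fin m → ℝ)) (t₀ T : ℝ) (ht : t₀ ≤ T)
    (k : (Fin n → ℝ) → ℝ → Fin m → ℝ)
    (hk : ∀ x : Fin n → ℝ, ∀ t ∈ Icc t₀ T, k x t ∈ U ∧
      (∀ u ∈ U, c x (k x t) t + fderiv ℝ V (x, t) (f x (k x t), 0)
          ≤ c x u t + fderiv ℝ V (x, t) (f x u, 0)) ∧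
      fderiv ℝ V (x, t) (0, 1) + (c x (k x t) t + fderiv ℝ V (x, t) (f x (k x t), 0)) = 0)
    (hbdry : ∀ x : Fin n → ℝ, V (x, T) = g x)
    (x₀ : Fin n → ℝ) (xs : ℝ → Fin n → ℝ) (hinit : xs t₀ = x₀)
    (hode : ∀ t ∈ Icc t₀ T, HasDerivAt xs (f (xs t) (k (xs t) t)) t)
    (hint : IntervalIntegrable (fun t => c (xs t) (k (xs t) t) t) volume t₀ T)
    -- any other admissible pair (u, x̃):
    (u : ℝ → Fin m → ℝ) (huU : ∀ t ∈ Icc t₀ T, u t ∈ U)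
    (xt : ℝ → Fin n → ℝ) (hinit' : xt t₀ = x₀)
    (hode' : ∀ t ∈ Icc t₀ T, HasDerivAt xt (f (xt t) (u t)) t)
    (hint' : IntervalIntegrable (fun t => c (xt t) (u t) t) volume t₀ T) :
    (∫ t in t₀..T, c (xs t) (k (xs t) t) t) + g (xs T)
      ≤ (∫ t in t₀..T, c (xt t) (u t) t) + g (xt T) := by
  have hVd : Differentiable ℝ V := hV.differentiable one_ne_zero
  have hoptimal := integral_eq_value_sub_of_hjb ht hVd hode hint
    fun t ht => (hk (xs t) t ht).2.2
  have hother := value_sub_le_integral_of_hjb ht hVd hode' hint' fun t ht => by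
    obtain ⟨-, hmin, hhjb⟩ := hk (xt t) t ht
    linarith [hmin (u t) (huU t ht)]
  rw [hinit, hbdry] at hoptimal
  rw [hinit', hbdry] at hother
  linarith

/-- Verification theorem (optimality): under the hypotheses of the verification
theorem, the closed-loop control `u*(t) = k(x*(t),t)` is optimal: its cost is no
larger than that of any other admissible pair `(u, x̃)`. -/
theorem verification_optimality {n m : ℕ}
    (V : ((Fin n → ℝ) × ℝ) → ℝ) (hV : ContDiff ℝ 1 V)
    (c : (Fin n → ℝ) → (Fin m → ℝ) → ℝ → ℝ)
    (hc : Continuous fun p : (Fin n → ℝ) × (Fin m → ℝ) × ℝ => c p.1 p.2.1 p.2.2)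
    (g : (Fin n → ℝ) → ℝ)
    (f : (Fin n → ℝ) → (Fin m → ℝ) → (Fin n → ℝ))
    (hf : Continuous fun p : (Fin n → ℝ) × (Fin m → ℝ) => f p.1 p.2)
    (U : Set (Fin m → ℝ)) (hU : U.Nonempty) (t₀ T : ℝ) (ht : t₀ ≤ T)
    (k : (Fin n → ℝ) → ℝ → Fin m → ℝ)
    (hkmeas : Measurable fun p : (Fin n → ℝ) × ℝ => k p.1 p.2)
    (hk : ∀ x : Fin n → ℝ, ∀ t ∈ Icc t₀ T, k x t ∈ U ∧
      (∀ u ∈ U, c x (k x t) t + fderiv ℝ V (x, t) (f x (k x t), 0)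
          ≤ c x u t + fderiv ℝ V (x, t) (f x u, 0)) ∧
      fderiv ℝ V (x, t) (0, 1) + (c x (k x t) t + fderiv ℝ V (x, t) (f x (k x t), 0)) = 0)
    (hbdry : ∀ x : Fin n → ℝ, V (x, T) = g x)
    (x₀ : Fin n → ℝ) (xs : ℝ → Fin n → ℝ) (hinit : xs t₀ = x₀)
    (hode : ∀ t ∈ Icc t₀ T, HasDerivAt xs (f (xs t) (k (xs t) t)) t)
    (hint : IntervalIntegrable (fun t => c (xs t) (k (xs t) t) t) volume t₀ T)
    -- any other admissible pair (u, x̃):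
    (u : ℝ → Fin m → ℝ) (hu : Measurable u) (huU : ∀ t ∈ Icc t₀ T, u t ∈ U)
    (xt : ℝ → Fin n → ℝ) (hinit' : xt t₀ = x₀)
    (hode' : ∀ t ∈ Icc t₀ T, HasDerivAt xt (f (xt t) (u t)) t)
    (hint' : IntervalIntegrable (fun t => c (xt t) (u t) t) volume t₀ T) :
    (∫ t in t₀..T, c (xs t) (k (xs t) t) t) + g (xs T)
      ≤ (∫ t in t₀..T, c (xt t) (u t) t) + g (xt T) :=
  verification_optimality_general V hV c g f U t₀ T ht k hk hbdry x₀ xs hinit hode hint u huU xt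
    hinit' hode' hint'
end

section
/- Combining the two previous results: if P is feasible for the SOS program (i.e., admits the SOS certificates above), then P(x₀,t₀) ≤ V(x₀,t₀) for every x₀ with ‖x₀‖₂ ≤ R, where V is the value function of the OCP with state constraint Ω = {x : ‖x‖₂ ≤ R}, input set U = [-1,1]ᵐ, polynomial data c, g, f, and horizon [t₀,T]. -/
open MeasureTheory Set

noncomputable section

/-- A function is a sum of squares. -/
def IsSumSq' {α : Type*} (q : α → ℝ) : Prop :=
  ∃ (N : ℕ) (p : Fin N → α → ℝ), ∀ y, q y = ∑ i, (p i y) ^ 2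

/-- Admissible pair with state constrained to `Ω`, including integrability of the
running cost along the trajectory. -/
def AdmPair {n m : ℕ} (f : EuclideanSpace ℝ (Fin n) → (Fin m → ℝ) → EuclideanSpace ℝ (Fin n))
    (c : EuclideanSpace ℝ (Fin n) → (Fin m → ℝ) → ℝ → ℝ)
    (Ω : Set (EuclideanSpace ℝ (Fin n))) (U : Set (Fin m → ℝ)) (t₀ T : ℝ)
    (x₀ : EuclideanSpace ℝ (Fin n))
    (u : ℝ → Fin m → ℝ) (x : ℝ → EuclideanSpace ℝ (Fin n)) : Prop :=
  Measurable u ∧ (∀ t ∈ Icc t₀ T, u t ∈ U) ∧ (∀ t ∈ Icc t₀ T, x t ∈ Ω) ∧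
    x t₀ = x₀ ∧ (∀ t ∈ Icc t₀ T, HasDerivAt x (f (x t) (u t)) t) ∧
    IntervalIntegrable (fun t => c (x t) (u t) t) volume t₀ T

/-- The `EReal`-valued value function (`+∞` if no admissible pair exists). -/
def VF {n m : ℕ} (f : EuclideanSpace ℝ (Fin n) → (Fin m → ℝ) → EuclideanSpace ℝ (Fin n))
    (c : EuclideanSpace ℝ (Fin n) → (Fin m → ℝ) → ℝ → ℝ) (g : EuclideanSpace ℝ (Fin n) → ℝ)
    (Ω : Set (EuclideanSpace ℝ (Fin n))) (U : Set (Fin m → ℝ)) (t₀ T : ℝ)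
    (x₀ : EuclideanSpace ℝ (Fin n)) : EReal :=
  sInf {y : EReal | ∃ u x, AdmPair f c Ω U t₀ T x₀ u x ∧
    y = (((∫ t in t₀..T, c (x t) (u t) t) + g (x T) : ℝ) : EReal)}

/-!
Each SOS identity `a - Σ σᵢ hᵢ = k` with `σᵢ, k` sums of squares forces `a ≥ 0` wherever all the
constraint polynomials `hᵢ` are nonnegative: on the ball this gives `P(·, T) ≤ g` and nonnegativity
of the Hamiltonian `∂ₜP + ∇ₓP · f + c` on the ball × box × `[t₀, T]`. Along an admissible
trajectory the derivative of `t ↦ P(x t, t)` is therefore `≥ -c`, and integrating from `t₀` to `T`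
gives `P(x₀, t₀) ≤ ∫ c + P(x T, T) ≤ ∫ c + g(x T)`.
-/

theorem IsSumSq'.nonneg {α : Type*} {q : α → ℝ} (hq : IsSumSq' q) (y : α) : 0 ≤ q y := by
  obtain ⟨N, p, hp⟩ := hq
  rw [hp]
  positivity

theorem sq_radius_sub_sq_norm_nonneg {E : Type*} [SeminormedAddGroup E] {R : ℝ} {z : E}
    (hz : ‖z‖ ≤ R) : 0 ≤ R ^ 2 - ‖z‖ ^ 2 :=
  sub_nonneg.2 (pow_le_pow_left₀ (norm_nonneg z) hz 2)

theorem le_of_sos_terminal_certificate {n : ℕ} (P : EuclideanSpace ℝ (Fin n) × ℝ → ℝ)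
    (g k₀ s₀ : EuclideanSpace ℝ (Fin n) → ℝ) (R T : ℝ) (hk₀ : IsSumSq' k₀) (hs₀ : IsSumSq' s₀)
    (hid₀ : ∀ x, g x - P (x, T) - s₀ x * (R ^ 2 - ‖x‖ ^ 2) = k₀ x)
    {z : EuclideanSpace ℝ (Fin n)} (hz : ‖z‖ ≤ R) : P (z, T) ≤ g z := by
  have hball : 0 ≤ s₀ z * (R ^ 2 - ‖z‖ ^ 2) :=
    mul_nonneg (hs₀.nonneg z) (sq_radius_sub_sq_norm_nonneg hz)
  linarith [hid₀ z, hk₀.nonneg z]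

theorem hamiltonian_nonneg_of_sos_certificate {n m : ℕ} (P : EuclideanSpace ℝ (Fin n) × ℝ → ℝ)
    (c : EuclideanSpace ℝ (Fin n) → (Fin m → ℝ) → ℝ → ℝ)
    (f : EuclideanSpace ℝ (Fin n) → (Fin m → ℝ) → EuclideanSpace ℝ (Fin n)) (R t₀ T : ℝ)
    (k₁ s₁ s₂ : EuclideanSpace ℝ (Fin n) × (Fin m → ℝ) × ℝ → ℝ)
    (s₃ : Fin m → EuclideanSpace ℝ (Fin n) × (Fin m → ℝ) × ℝ → ℝ)
    (hk₁ : IsSumSq' k₁) (hs₁ : IsSumSq' s₁) (hs₂ : IsSumSq' s₂) (hs₃ : ∀ i, IsSumSq' (s₃ i))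
    (hid₁ : ∀ x u t, fderiv ℝ P (x, t) (f x u, 1) + c x u t
        - s₁ (x, u, t) * (R ^ 2 - ‖x‖ ^ 2)
        - s₂ (x, u, t) * ((t - t₀) * (T - t))
        - ∑ i, s₃ i (x, u, t) * ((u i + 1) * (1 - u i)) = k₁ (x, u, t))
    {z : EuclideanSpace ℝ (Fin n)} {v : Fin m → ℝ} {t : ℝ} (hz : ‖z‖ ≤ R)
    (hv : ∀ i, v i ∈ Icc (-1 : ℝ) 1) (ht : t ∈ Icc t₀ T) :
    0 ≤ fderiv ℝ P (z, t) (f z v, 1) + c z v t := by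
  have hball : 0 ≤ s₁ (z, v, t) * (R ^ 2 - ‖z‖ ^ 2) :=
    mul_nonneg (hs₁.nonneg _) (sq_radius_sub_sq_norm_nonneg hz)
  have hhorizon : 0 ≤ s₂ (z, v, t) * ((t - t₀) * (T - t)) :=
    mul_nonneg (hs₂.nonneg _) (mul_nonneg (sub_nonneg.2 ht.1) (sub_nonneg.2 ht.2))
  have hbox : 0 ≤ ∑ i, s₃ i (z, v, t) * ((v i + 1) * (1 - v i)) :=
    Finset.sum_nonneg fun i _ => mul_nonneg ((hs₃ i).nonneg _)
      (mul_nonneg (by linarith [(hv i).1]) (sub_nonneg.2 (hv i).2))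
  linarith [hid₁ z v t, hk₁.nonneg (z, v, t)]

section Verification

variable {n m : ℕ} {P : EuclideanSpace ℝ (Fin n) × ℝ → ℝ}
  {f : EuclideanSpace ℝ (Fin n) → (Fin m → ℝ) → EuclideanSpace ℝ (Fin n)}
  {c : EuclideanSpace ℝ (Fin n) → (Fin m → ℝ) → ℝ → ℝ} {g : EuclideanSpace ℝ (Fin n) → ℝ}
  {Ω : Set (EuclideanSpace ℝ (Fin n))} {U : Set (Fin m → ℝ)} {t₀ T : ℝ}
  {x₀ : EuclideanSpace ℝ (Fin n)}

theorem le_cost_of_admPair (hP : Differentiable ℝ P) (ht : t₀ ≤ T)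
    (hterm : ∀ z ∈ Ω, P (z, T) ≤ g z)
    (hham : ∀ z ∈ Ω, ∀ v ∈ U, ∀ t ∈ Icc t₀ T, 0 ≤ fderiv ℝ P (z, t) (f z v, 1) + c z v t)
    {u : ℝ → Fin m → ℝ} {x : ℝ → EuclideanSpace ℝ (Fin n)}
    (hadm : AdmPair f c Ω U t₀ T x₀ u x) :
    P (x₀, t₀) ≤ (∫ t in t₀..T, c (x t) (u t) t) + g (x T) := by
  obtain ⟨-, hU, hΩ, rfl, hx, hcint⟩ := hadm
  have hPx : ∀ t ∈ Icc t₀ T,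
      HasDerivAt (fun s => P (x s, s)) (fderiv ℝ P (x t, t) (f (x t) (u t), 1)) t :=
    fun t htI => (hP (x t, t)).hasFDerivAt.comp_hasDerivAt (f := fun s => (x s, s)) t
      ((hx t htI).prodMk (hasDerivAt_id t))
  -- A one-sided fundamental theorem of calculus: `d/dt P(x t, t)` need not be integrable.
  have hdecrease : -P (x T, T) - -P (x t₀, t₀) ≤ ∫ t in t₀..T, c (x t) (u t) t :=
    intervalIntegral.sub_le_integral_of_hasDeriv_right_of_le ht
      (fun t htI => (hPx t htI).continuousAt.continuousWithinAt.neg)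
      (fun t htI => (hPx t (Ioo_subset_Icc_self htI)).neg.hasDerivWithinAt)
      ((intervalIntegrable_iff_integrableOn_Icc_of_le ht).1 hcint)
      (fun t htI => by
        have hI := Ioo_subset_Icc_self htI
        linarith [hham (x t) (hΩ t hI) (u t) (hU t hI) t hI])
  linarith [hterm (x T) (hΩ T (right_mem_Icc.2 ht))]

theorem le_VF (hP : Differentiable ℝ P) (ht : t₀ ≤ T) (hterm : ∀ z ∈ Ω, P (z, T) ≤ g z)
    (hham : ∀ z ∈ Ω, ∀ v ∈ U, ∀ t ∈ Icc t₀ T, 0 ≤ fderiv ℝ P (z, t) (f z v, 1) + c z v t) :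
    (P (x₀, t₀) : EReal) ≤ VF f c g Ω U t₀ T x₀ := by
  refine le_sInf ?_
  rintro _ ⟨u, x, hadm, rfl⟩
  exact EReal.coe_le_coe_iff.2 (le_cost_of_admPair hP ht hterm hham hadm)

end Verification

theorem sos_feasible_sub_value_general {n m : ℕ}
    (P : (EuclideanSpace ℝ (Fin n) × ℝ) → ℝ) (hP : ContDiff ℝ 1 P)
    (c : EuclideanSpace ℝ (Fin n) → (Fin m → ℝ) → ℝ → ℝ)
    (g : EuclideanSpace ℝ (Fin n) → ℝ)
    (f : EuclideanSpace ℝ (Fin n) → (Fin m → ℝ) → EuclideanSpace ℝ (Fin n))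
    (R t₀ T : ℝ) (ht : t₀ ≤ T)
    (k₀ s₀ : EuclideanSpace ℝ (Fin n) → ℝ)
    (k₁ s₁ s₂ : EuclideanSpace ℝ (Fin n) × (Fin m → ℝ) × ℝ → ℝ)
    (s₃ : Fin m → EuclideanSpace ℝ (Fin n) × (Fin m → ℝ) × ℝ → ℝ)
    (hk₀ : IsSumSq' k₀) (hs₀ : IsSumSq' s₀) (hk₁ : IsSumSq' k₁)
    (hs₁ : IsSumSq' s₁) (hs₂ : IsSumSq' s₂) (hs₃ : ∀ i, IsSumSq' (s₃ i))
    (hid₀ : ∀ x, g x - P (x, T) - s₀ x * (R ^ 2 - ‖x‖ ^ 2) = k₀ x)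
    (hid₁ : ∀ x u t, fderiv ℝ P (x, t) (f x u, 1) + c x u t
        - s₁ (x, u, t) * (R ^ 2 - ‖x‖ ^ 2)
        - s₂ (x, u, t) * ((t - t₀) * (T - t))
        - ∑ i, s₃ i (x, u, t) * ((u i + 1) * (1 - u i)) = k₁ (x, u, t)) :
    ∀ x₀ : EuclideanSpace ℝ (Fin n), ‖x₀‖ ≤ R →
      (P (x₀, t₀) : EReal)
        ≤ VF f c g (Metric.closedBall 0 R) {u | ∀ i, u i ∈ Icc (-1:ℝ) 1} t₀ T x₀ := by
  intro x₀ _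
  refine le_VF (hP.differentiable one_ne_zero) ht (fun z hz => ?_) (fun z hz v hv t htI => ?_)
  · exact le_of_sos_terminal_certificate P g k₀ s₀ R T hk₀ hs₀ hid₀ (mem_closedBall_zero_iff.1 hz)
  · exact hamiltonian_nonneg_of_sos_certificate P c f R t₀ T k₁ s₁ s₂ s₃ hk₁ hs₁ hs₂ hs₃ hid₁
      (mem_closedBall_zero_iff.1 hz) hv htI

/-- If `P` is feasible for the SOS program, then `P` is a sub-value function of the
state-constrained OCP on the closed ball of radius `R` with `U = [-1,1]^m`. -/
theorem sos_feasible_sub_value {n m : ℕ}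
    (P : (EuclideanSpace ℝ (Fin n) × ℝ) → ℝ) (hP : ContDiff ℝ 1 P)
    (c : EuclideanSpace ℝ (Fin n) → (Fin m → ℝ) → ℝ → ℝ)
    (hc : Continuous fun p : EuclideanSpace ℝ (Fin n) × (Fin m → ℝ) × ℝ => c p.1 p.2.1 p.2.2)
    (g : EuclideanSpace ℝ (Fin n) → ℝ)
    (f : EuclideanSpace ℝ (Fin n) → (Fin m → ℝ) → EuclideanSpace ℝ (Fin n))
    (hf : Continuous fun p : EuclideanSpace ℝ (Fin n) × (Fin m → ℝ) => f p.1 p.2)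
    (R t₀ T : ℝ) (ht : t₀ ≤ T)
    (k₀ s₀ : EuclideanSpace ℝ (Fin n) → ℝ)
    (k₁ s₁ s₂ : EuclideanSpace ℝ (Fin n) × (Fin m → ℝ) × ℝ → ℝ)
    (s₃ : Fin m → EuclideanSpace ℝ (Fin n) × (Fin m → ℝ) × ℝ → ℝ)
    (hk₀ : IsSumSq' k₀) (hs₀ : IsSumSq' s₀) (hk₁ : IsSumSq' k₁)
    (hs₁ : IsSumSq' s₁) (hs₂ : IsSumSq' s₂) (hs₃ : ∀ i, IsSumSq' (s₃ i))
    (hid₀ : ∀ x, g x - P (x, T) - s₀ x * (R ^ 2 - ‖x‖ ^ 2) = k₀ x)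
    (hid₁ : ∀ x u t, fderiv ℝ P (x, t) (f x u, 1) + c x u t
        - s₁ (x, u, t) * (R ^ 2 - ‖x‖ ^ 2)
        - s₂ (x, u, t) * ((t - t₀) * (T - t))
        - ∑ i, s₃ i (x, u, t) * ((u i + 1) * (1 - u i)) = k₁ (x, u, t)) :
    ∀ x₀ : EuclideanSpace ℝ (Fin n), ‖x₀‖ ≤ R →
      (P (x₀, t₀) : EReal)
        ≤ VF f c g (Metric.closedBall 0 R) {u | ∀ i, u i ∈ Icc (-1:ℝ) 1} t₀ T x₀ :=
  sos_feasible_sub_value_general P hP c g f R t₀ T ht k₀ s₀ k₁ s₁ s₂ s₃ hk₀ hs₀ hk₁ hs₁ hs₂ hs₃ hid₀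
    hid₁

end
end
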